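/- arXiv:2509.01945 — 3 statements merged into one kernel-verified Lean document; each statement's English description precedes it below -/
import Mathlib

section
/- There exists a universal constant C > 0 such that for all positive integers t and t', every function f from {0,1}^t to density matrices on Fin (2^{t'}) is C·√(t'/t)-quantumly-distributionally stable; that is, (1/t)·∑_{j=1}^{t} γ_j ≤ C·√(t'/t), where γ_j = (1/2)·∑_{β∈{0,1}} D(f(U^t|_{j←β}), f(U^t)). -/
open Matrix BigOperators ComplexOrder

/-- The trace norm of a Hermitian matrix: the sum of the absolute values of its
eigenvalues (defined to be `0` on non-Hermitian matrices). -/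
noncomputable def traceNorm {n : Type*} [Fintype n] [DecidableEq n]
    (A : Matrix n n ℂ) : ℝ :=
  if h : A.IsHermitian then ∑ i, |h.eigenvalues i| else 0

/-- The trace distance between two matrices. -/
noncomputable def traceDist {n : Type*} [Fintype n] [DecidableEq n]
    (ρ σ : Matrix n n ℂ) : ℝ :=
  (1 / 2) * traceNorm (ρ - σ)

/-- A density matrix: positive semidefinite with trace 1. -/
def IsDensityMatrix {n : Type*} [Fintype n] [DecidableEq n]
    (ρ : Matrix n n ℂ) : Prop :=
  ρ.PosSemidef ∧ ρ.trace = 1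

/-- `f(U^t)`: the average of `f` over the uniform distribution on `{0,1}^t`. -/
noncomputable def avgUniform {t N : ℕ} (f : (Fin t → Bool) → Matrix (Fin N) (Fin N) ℂ) :
    Matrix (Fin N) (Fin N) ℂ :=
  ((2 : ℂ) ^ t)⁻¹ • ∑ b : Fin t → Bool, f b

/-- `f(U^t|_{j←β})`: the average of `f` over the uniform distribution on `{0,1}^t`
conditioned on bit `j` being `β`. -/
noncomputable def avgCond {t N : ℕ} (f : (Fin t → Bool) → Matrix (Fin N) (Fin N) ℂ)
    (j : Fin t) (β : Bool) : Matrix (Fin N) (Fin N) ℂ :=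
  ((2 : ℂ) ^ (t - 1))⁻¹ • ∑ b ∈ Finset.univ.filter (fun b : Fin t → Bool => b j = β), f b

/-!
Let `F_j = E_b [±f(b)]` be the degree-one Fourier coefficients of `f`, so that `γ_j = ‖F_j‖₁ / 2`.
By trace duality `‖F_j‖₁ = tr (F_j V_j)` for Hermitian unitaries `V_j`, hence
`∑_j ‖F_j‖₁ = E_b tr (f(b) X_b)` with `X_b = ∑_j ±V_j`. For even `m = 2k`, Jensen's inequality,
over `b` and over the spectrum of `X_b`, gives `(∑_j ‖F_j‖₁)^m ≤ E_b tr (X_b^m)`. Expanding `X_b^m`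
into words in the unitaries `V_j`, each of trace at most `N` and carrying a nonnegative Rademacher
weight, bounds this by `N · E_b (∑_j ±1)^m ≤ 2N (6kt)^k`. Taking `k = log₂ N = t'` gives
`(∑_j ‖F_j‖₁)² ≤ 24 t t'`.
-/

def boolSign (v : Bool) : ℝ := if v then 1 else -1

lemma boolSign_mul_self (v : Bool) : boolSign v * boolSign v = 1 := by
  cases v <;> norm_num [boolSign]

lemma pow_le_factorial_mul_cosh (x : ℝ) (k : ℕ) :
    x ^ (2 * k) ≤ 2 * (2 * k).factorial * Real.cosh x := by
  have hfac : (0 : ℝ) < (2 * k).factorial := by positivity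
  calc x ^ (2 * k) = |x| ^ (2 * k) := ((even_two_mul k).pow_abs x).symm
    _ ≤ (2 * k).factorial * Real.exp |x| := by
        rw [← div_le_iff₀' hfac]; exact Real.pow_div_factorial_le_exp _ (abs_nonneg x) _
    _ ≤ (2 * k).factorial * (2 * Real.cosh x) := by
        gcongr; rw [Real.cosh_eq]; linarith [Real.exp_abs_le x]
    _ = 2 * (2 * k).factorial * Real.cosh x := by ring

lemma factorial_two_mul_mul_exp_one_pow_le (k : ℕ) :
    ((2 * k).factorial : ℝ) * Real.exp 1 ^ k ≤ (12 * k ^ 2) ^ k := by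
  have hfac : ((2 * k).factorial : ℝ) ≤ (4 * k ^ 2) ^ k :=
    calc ((2 * k).factorial : ℝ) ≤ ((2 * k : ℕ) : ℝ) ^ (2 * k) := by
          exact_mod_cast Nat.factorial_le_pow (2 * k)
      _ = (4 * k ^ 2) ^ k := by push_cast; rw [pow_mul]; ring
  calc ((2 * k).factorial : ℝ) * Real.exp 1 ^ k ≤ (4 * k ^ 2) ^ k * 3 ^ k := by
        gcongr; exact Real.exp_one_lt_d9.le.trans (by norm_num)
    _ = (12 * k ^ 2) ^ k := by rw [← mul_pow]; ring

section BooleanCube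

variable {ι : Type*} [Fintype ι] [DecidableEq ι]

lemma sum_prod_apply_eq_prod_sum (g : ι → Bool → ℝ) :
    ∑ b : ι → Bool, ∏ j, g j (b j) = ∏ j, (g j false + g j true) := by
  simp [← Fintype.prod_sum, add_comm]

lemma sum_prod_boolSign_nonneg {m : ℕ} (c : Fin m → ι) :
    0 ≤ ∑ b : ι → Bool, ∏ i, boolSign (b (c i)) := by
  have hfiber : ∀ b : ι → Bool, ∏ i, boolSign (b (c i)) =
      ∏ j, boolSign (b j) ^ (Finset.univ.filter (c · = j)).card := by
    intro b
    rw [← Finset.prod_fiberwise' Finset.univ c (fun j => boolSign (b j))]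
    simp only [Finset.prod_const]
  rw [Finset.sum_congr rfl fun b _ => hfiber b,
    sum_prod_apply_eq_prod_sum fun j v => boolSign v ^ (Finset.univ.filter (c · = j)).card]
  refine Finset.prod_nonneg fun j _ => ?_
  rcases Nat.even_or_odd (Finset.univ.filter (c · = j)).card with h | h <;>
    simp [boolSign, h.neg_one_pow]

lemma sum_exp_mul_sum_boolSign (μ : ℝ) :
    ∑ b : ι → Bool, Real.exp (μ * ∑ j, boolSign (b j)) = (2 * Real.cosh μ) ^ Fintype.card ι := by
  simp_rw [Finset.mul_sum, Real.exp_sum,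
    sum_prod_apply_eq_prod_sum (fun _ v => Real.exp (μ * boolSign v)), Finset.prod_const,
    Finset.card_univ, Real.cosh_eq]
  simp [boolSign, add_comm, mul_div_cancel₀]

lemma sum_cosh_mul_sum_boolSign (μ : ℝ) :
    ∑ b : ι → Bool, Real.cosh (μ * ∑ j, boolSign (b j)) = (2 * Real.cosh μ) ^ Fintype.card ι := by
  have h := sum_exp_mul_sum_boolSign (ι := ι) (-μ)
  simp only [Real.cosh_neg, neg_mul] at h
  simp only [Real.cosh_eq, ← Finset.sum_div, Finset.sum_add_distrib, h, sum_exp_mul_sum_boolSign]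
  ring

lemma pow_mul_sum_sum_boolSign_pow_le (l : ℝ) (k : ℕ) :
    l ^ (2 * k) * ∑ b : ι → Bool, (∑ j, boolSign (b j)) ^ (2 * k) ≤
      2 * (2 * k).factorial * (2 ^ Fintype.card ι * Real.exp (Fintype.card ι * (l ^ 2 / 2))) := by
  rw [Finset.mul_sum]
  calc ∑ b : ι → Bool, l ^ (2 * k) * (∑ j, boolSign (b j)) ^ (2 * k)
      ≤ ∑ b : ι → Bool, 2 * (2 * k).factorial * Real.cosh (l * ∑ j, boolSign (b j)) :=
        Finset.sum_le_sum fun b _ => mul_pow l _ (2 * k) ▸ pow_le_factorial_mul_cosh _ k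
    _ = 2 * (2 * k).factorial * (2 * Real.cosh l) ^ Fintype.card ι := by
        rw [← Finset.mul_sum, sum_cosh_mul_sum_boolSign]
    _ ≤ 2 * (2 * k).factorial * (2 * Real.exp (l ^ 2 / 2)) ^ Fintype.card ι := by
        gcongr; exact Real.cosh_le_exp_half_sq l
    _ = 2 * (2 * k).factorial * (2 ^ Fintype.card ι * Real.exp (Fintype.card ι * (l ^ 2 / 2))) := by
        rw [mul_pow, Real.exp_nat_mul]

lemma sum_sum_boolSign_pow_le [Nonempty ι] {k : ℕ} (hk : 0 < k) :
    ∑ b : ι → Bool, (∑ j, boolSign (b j)) ^ (2 * k) ≤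
      2 ^ Fintype.card ι * (2 * (6 * k * Fintype.card ι) ^ k) := by
  set T := Fintype.card ι
  have hT : (0 : ℝ) < T := by exact_mod_cast Fintype.card_pos
  -- `l ^ 2 = 2 k / T` minimizes `exp (T l ^ 2 / 2) / l ^ (2 k)`.
  have hmoment := pow_mul_sum_sum_boolSign_pow_le (ι := ι) (Real.sqrt (2 * k / T)) k
  rw [pow_mul, Real.sq_sqrt (by positivity), show (T : ℝ) * (2 * k / T / 2) = k by field_simp,
    ← Real.exp_one_pow] at hmoment
  rw [← mul_le_mul_iff_of_pos_left (by positivity : (0 : ℝ) < (2 * k / T) ^ k)]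
  calc (2 * k / T : ℝ) ^ k * ∑ b : ι → Bool, (∑ j, boolSign (b j)) ^ (2 * k)
      ≤ 2 * 2 ^ T * ((2 * k).factorial * Real.exp 1 ^ k) := by linarith
    _ ≤ 2 * 2 ^ T * (12 * k ^ 2) ^ k := by gcongr; exact factorial_two_mul_mul_exp_one_pow_le k
    _ = (2 * k / T) ^ k * (2 ^ T * (2 * (6 * k * T) ^ k)) := by
        rw [show (12 * k ^ 2 : ℝ) = 2 * k / T * (6 * k * T) by field_simp; ring, mul_pow]
        ring

end BooleanCube

lemma sum_smul_pow_eq_sum_prod {R A ι : Type*} [CommSemiring R] [Semiring A] [Algebra R A]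
    [Fintype ι] (a : ι → R) (M : ι → A) (m : ℕ) :
    (∑ j, a j • M j) ^ m = ∑ c : Fin m → ι, (∏ i, a (c i)) • (List.ofFn fun i => M (c i)).prod := by
  induction m with
  | zero => simp
  | succ m ih =>
    rw [pow_succ', ih, Finset.sum_mul_sum, ← (Fin.consEquiv fun _ => ι).sum_comp,
      Fintype.sum_prod_type]
    refine Finset.sum_congr rfl fun j _ => Finset.sum_congr rfl fun c _ => ?_
    simp [Fin.consEquiv, Fin.prod_univ_succ, List.ofFn_succ, mul_smul, smul_comm (a j)]

namespace Matrix.IsHermitian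

variable {n : Type*} [Fintype n] [DecidableEq n] {A : Matrix n n ℂ}

lemma trace_mul_eq_sum_eigenvalues_mul (hA : A.IsHermitian) (B : Matrix n n ℂ) :
    (A * B).trace = ∑ i, (hA.eigenvalues i : ℂ) *
      (star (hA.eigenvectorUnitary : Matrix n n ℂ) * B * hA.eigenvectorUnitary) i i := by
  set U : Matrix n n ℂ := ↑hA.eigenvectorUnitary
  have hcycle :
      (A * B).trace = (diagonal (RCLike.ofReal ∘ hA.eigenvalues) * (star U * B * U)).trace := by
    conv_lhs => rw [hA.spectral_theorem, Unitary.conjStarAlgAut_apply]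
    rw [Matrix.mul_assoc, trace_mul_comm, ← Matrix.mul_assoc, trace_mul_comm]
  rw [hcycle]
  simp [trace, diagonal_mul]

lemma re_trace_mul_le_traceNorm (hA : A.IsHermitian) {V : Matrix n n ℂ}
    (hV : V ∈ unitaryGroup n ℂ) : (A * V).trace.re ≤ traceNorm A := by
  set U : Matrix n n ℂ := ↑hA.eigenvectorUnitary
  have hW : star U * V * U ∈ unitaryGroup n ℂ :=
    mul_mem (mul_mem (Unitary.star_mem hA.eigenvectorUnitary.2) hV) hA.eigenvectorUnitary.2
  rw [hA.trace_mul_eq_sum_eigenvalues_mul, Complex.re_sum, traceNorm, dif_pos hA]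
  refine Finset.sum_le_sum fun i _ => ?_
  calc ((hA.eigenvalues i : ℂ) * (star U * V * U) i i).re
      ≤ ‖(hA.eigenvalues i : ℂ) * (star U * V * U) i i‖ := Complex.re_le_norm _
    _ ≤ |hA.eigenvalues i| * 1 := by
        rw [norm_mul, Complex.norm_real, Real.norm_eq_abs]
        gcongr
        exact entry_norm_bound_of_unitary hW i i
    _ = |hA.eigenvalues i| := mul_one _

lemma exists_trace_mul_eq_traceNorm (hA : A.IsHermitian) :
    ∃ V ∈ unitaryGroup n ℂ, V.IsHermitian ∧ (A * V).trace = traceNorm A := by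
  set U : Matrix n n ℂ := ↑hA.eigenvectorUnitary
  set g : n → ℂ := fun i => if 0 ≤ hA.eigenvalues i then 1 else -1
  have hg : diagonal g ∈ unitaryGroup n ℂ := by
    rw [mem_unitaryGroup_iff, star_eq_conjTranspose, diagonal_conjTranspose, diagonal_mul_diagonal,
      ← diagonal_one]
    congr 1; ext i; by_cases h : 0 ≤ hA.eigenvalues i <;> simp [g, h]
  refine ⟨U * diagonal g * star U, mul_mem (mul_mem hA.eigenvectorUnitary.2 hg)
    (Unitary.star_mem hA.eigenvectorUnitary.2), ?_, ?_⟩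
  · rw [star_eq_conjTranspose]
    refine isHermitian_mul_mul_conjTranspose _ (isHermitian_diagonal_of_self_adjoint _ ?_)
    ext i; by_cases h : 0 ≤ hA.eigenvalues i <;> simp [g, h]
  · have hconj : star U * (U * diagonal g * star U) * U = diagonal g := by
      simp [U, ← Matrix.mul_assoc, Matrix.mul_assoc _ (star _)]
    rw [hA.trace_mul_eq_sum_eigenvalues_mul, hconj, traceNorm, dif_pos hA, Complex.ofReal_sum]
    refine Finset.sum_congr rfl fun i _ => ?_
    by_cases h : 0 ≤ hA.eigenvalues i
    · simp [g, h, abs_of_nonneg h]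
    · simp [g, h, abs_of_neg (not_le.mp h)]

lemma traceNorm_neg (hA : A.IsHermitian) : traceNorm (-A) = traceNorm A := by
  have hle : ∀ {B : Matrix n n ℂ} (hB : B.IsHermitian), traceNorm (-B) ≤ traceNorm B := by
    intro B hB
    obtain ⟨V, hV, -, hBV⟩ := hB.neg.exists_trace_mul_eq_traceNorm
    have hV' : -V ∈ unitaryGroup n ℂ := by
      rw [mem_unitaryGroup_iff] at hV ⊢; simpa using hV
    calc traceNorm (-B) = (-B * V).trace.re := by rw [hBV, Complex.ofReal_re]
      _ = (B * -V).trace.re := by rw [neg_mul, mul_neg]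
      _ ≤ traceNorm B := hB.re_trace_mul_le_traceNorm hV'
  exact le_antisymm (hle hA) (by simpa using hle hA.neg)

lemma trace_pow_eq_sum_eigenvalues_pow (hA : A.IsHermitian) (m : ℕ) :
    (A ^ m).trace = ∑ i, (hA.eigenvalues i : ℂ) ^ m := by
  conv_lhs => rw [hA.spectral_theorem, ← map_pow, Unitary.conjStarAlgAut_apply]
  rw [trace_mul_cycle, Unitary.coe_star_mul_self, one_mul, diagonal_pow, trace_diagonal]
  rfl

lemma re_trace_density_mul_pow_le (hA : A.IsHermitian) {ρ : Matrix n n ℂ}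
    (hρ : IsDensityMatrix ρ) {m : ℕ} (hm : Even m) :
    (ρ * A).trace.re ^ m ≤ (A ^ m).trace.re := by
  set U : Matrix n n ℂ := ↑hA.eigenvectorUnitary
  set p : n → ℝ := fun i => (star U * ρ * U) i i |>.re
  have hp0 : ∀ i, 0 ≤ p i := fun i =>
    (Complex.nonneg_iff.mp (hρ.1.conjTranspose_mul_mul_same U).diag_nonneg).1
  have hp1 : ∑ i, p i = 1 := by
    have : (star U * ρ * U).trace = 1 := by
      rw [trace_mul_cycle, Unitary.mul_star_self_of_mem hA.eigenvectorUnitary.2, one_mul, hρ.2]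
    simpa [trace, p, Complex.re_sum] using congrArg Complex.re this
  have hmean : (ρ * A).trace.re = ∑ i, p i * hA.eigenvalues i := by
    rw [trace_mul_comm, hA.trace_mul_eq_sum_eigenvalues_mul, Complex.re_sum]
    exact Finset.sum_congr rfl fun i _ => by rw [Complex.re_ofReal_mul, mul_comm]
  have hmoment : (A ^ m).trace.re = ∑ i, hA.eigenvalues i ^ m := by
    simp [hA.trace_pow_eq_sum_eigenvalues_pow, Complex.re_sum, ← Complex.ofReal_pow]
  rw [hmean, hmoment]
  calc (∑ i, p i * hA.eigenvalues i) ^ m ≤ ∑ i, p i * hA.eigenvalues i ^ m := by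
        simpa using hm.convexOn_pow.map_sum_le (fun i _ => hp0 i) hp1 (fun i _ => Set.mem_univ _)
    _ ≤ ∑ i, hA.eigenvalues i ^ m := by
        refine Finset.sum_le_sum fun i _ => mul_le_of_le_one_left (hm.pow_nonneg _) ?_
        exact hp1 ▸ Finset.single_le_sum (fun j _ => hp0 j) (Finset.mem_univ i)

end Matrix.IsHermitian

lemma re_trace_le_card_of_mem_unitaryGroup {n : Type*} [Fintype n] [DecidableEq n]
    {W : Matrix n n ℂ} (hW : W ∈ unitaryGroup n ℂ) :
    W.trace.re ≤ Fintype.card n := by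
  calc W.trace.re = ∑ i, (W i i).re := Complex.re_sum _ _
    _ ≤ ∑ _i : n, (1 : ℝ) := Finset.sum_le_sum fun i _ =>
        (Complex.re_le_norm (W i i)).trans (entry_norm_bound_of_unitary hW i i)
    _ = Fintype.card n := by simp

lemma sum_re_trace_sum_boolSign_smul_pow_le {ι n : Type*} [Fintype ι] [DecidableEq ι]
    [Fintype n] [DecidableEq n] (V : ι → Matrix n n ℂ)
    (hV : ∀ j, V j ∈ unitaryGroup n ℂ) (m : ℕ) :
    ∑ b : ι → Bool, ((∑ j, boolSign (b j) • V j) ^ m).trace.re ≤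
      Fintype.card n * ∑ b : ι → Bool, (∑ j, boolSign (b j)) ^ m := by
  have hword : ∀ c : Fin m → ι, (List.ofFn fun i => V (c i)).prod ∈ unitaryGroup n ℂ := fun c =>
    Submonoid.list_prod_mem _ fun A hA => by obtain ⟨i, rfl⟩ := List.mem_ofFn.mp hA; exact hV _
  -- Each word in the `V j` is unitary and has a nonnegative Rademacher weight.
  simp_rw [sum_smul_pow_eq_sum_prod, trace_sum, trace_smul, Complex.re_sum, Complex.smul_re,
    smul_eq_mul, Fintype.sum_pow, Finset.mul_sum]
  rw [Finset.sum_comm, Finset.sum_comm (γ := ι → Bool)]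
  refine Finset.sum_le_sum fun c _ => ?_
  rw [← Finset.sum_mul, ← Finset.mul_sum, mul_comm]
  exact mul_le_mul_of_nonneg_right (re_trace_le_card_of_mem_unitaryGroup (hword c))
    (sum_prod_boolSign_nonneg c)

section FourierCoeff

variable {ι n : Type*} [Fintype ι] [DecidableEq ι]

-- The degree-one Fourier coefficient `E_b [(-1)^{b_j + 1} f b]` of `f`, reading `true` as bit 1.
noncomputable def boolFourierCoeff (f : (ι → Bool) → Matrix n n ℂ) (j : ι) : Matrix n n ℂ :=
  ((2 : ℝ) ^ Fintype.card ι)⁻¹ • ∑ b, boolSign (b j) • f b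

lemma isHermitian_boolFourierCoeff {f : (ι → Bool) → Matrix n n ℂ}
    (hf : ∀ b, (f b).IsHermitian) (j : ι) : (boolFourierCoeff f j).IsHermitian :=
  (IsSelfAdjoint.all _).smul (isSelfAdjoint_sum _ fun b _ => (IsSelfAdjoint.all _).smul (hf b))

lemma sum_re_trace_boolFourierCoeff_mul [Fintype n] (f : (ι → Bool) → Matrix n n ℂ)
    (V : ι → Matrix n n ℂ) :
    ∑ j, (boolFourierCoeff f j * V j).trace.re =
      ∑ b : ι → Bool, ((2 : ℝ) ^ Fintype.card ι)⁻¹ *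
        (f b * ∑ j, boolSign (b j) • V j).trace.re := by
  simp only [boolFourierCoeff, Matrix.smul_mul, Finset.sum_mul, Matrix.mul_sum, Matrix.mul_smul,
    trace_smul, trace_sum, Complex.re_sum, Complex.smul_re, smul_eq_mul, ← Finset.mul_sum]
  rw [Finset.sum_comm]

lemma sum_re_trace_boolFourierCoeff_mul_pow_le [Nonempty ι] [Fintype n] [DecidableEq n]
    {f : (ι → Bool) → Matrix n n ℂ} (hf : ∀ b, IsDensityMatrix (f b)) {V : ι → Matrix n n ℂ}
    (hVu : ∀ j, V j ∈ unitaryGroup n ℂ) (hVh : ∀ j, (V j).IsHermitian) {k : ℕ} (hk : 0 < k) :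
    (∑ j, (boolFourierCoeff f j * V j).trace.re) ^ (2 * k) ≤
      Fintype.card n * (2 * (6 * k * Fintype.card ι) ^ k) := by
  set T := Fintype.card ι
  set w : ℝ := ((2 : ℝ) ^ T)⁻¹
  set X : (ι → Bool) → Matrix n n ℂ := fun b => ∑ j, boolSign (b j) • V j
  have hX : ∀ b, (X b).IsHermitian := fun b =>
    isSelfAdjoint_sum _ fun j _ => (IsSelfAdjoint.all _).smul (hVh j)
  have hw : ∑ _b : ι → Bool, w = 1 := by simp [w, T]
  have hm : Even (2 * k) := even_two_mul k
  rw [sum_re_trace_boolFourierCoeff_mul]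
  calc (∑ b : ι → Bool, w * (f b * X b).trace.re) ^ (2 * k)
      ≤ ∑ b : ι → Bool, w * (f b * X b).trace.re ^ (2 * k) := by
        simpa using hm.convexOn_pow.map_sum_le (fun b _ => by positivity) hw
          (fun b _ => Set.mem_univ ((f b * X b).trace.re))
    _ ≤ ∑ b : ι → Bool, w * ((X b) ^ (2 * k)).trace.re := by
        gcongr with b
        exact (hX b).re_trace_density_mul_pow_le (hf b) hm
    _ ≤ w * (Fintype.card n * (2 ^ T * (2 * (6 * k * T) ^ k))) := by
        rw [← Finset.mul_sum]
        gcongr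
        exact (sum_re_trace_sum_boolSign_smul_pow_le V hVu _).trans
          (by gcongr; exact sum_sum_boolSign_pow_le hk)
    _ = Fintype.card n * (2 * (6 * k * T) ^ k) := by
        simp only [w]; field_simp

lemma sum_traceNorm_boolFourierCoeff_sq_le [Nonempty ι] [Fintype n] [DecidableEq n]
    {f : (ι → Bool) → Matrix n n ℂ} (hf : ∀ b, IsDensityMatrix (f b)) {k : ℕ} (hk : 0 < k)
    (hn : Fintype.card n ≤ 2 ^ k) :
    (∑ j, traceNorm (boolFourierCoeff f j)) ^ 2 ≤ 24 * k * Fintype.card ι := by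
  choose V hVu hVh hV using fun j =>
    (isHermitian_boolFourierCoeff (fun b => (hf b).1.1) j).exists_trace_mul_eq_traceNorm
  have hS : ∑ j, traceNorm (boolFourierCoeff f j) =
      ∑ j, (boolFourierCoeff f j * V j).trace.re := by
    simp only [hV, Complex.ofReal_re]
  rw [hS, ← pow_le_pow_iff_left₀ (sq_nonneg _) (by positivity) hk.ne', ← pow_mul]
  calc (∑ j, (boolFourierCoeff f j * V j).trace.re) ^ (2 * k)
      ≤ Fintype.card n * (2 * (6 * k * Fintype.card ι) ^ k) :=
        sum_re_trace_boolFourierCoeff_mul_pow_le hf hVu hVh hk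
    _ ≤ 2 ^ k * (2 ^ k * (6 * k * Fintype.card ι) ^ k) := by
        gcongr
        · exact_mod_cast hn
        · exact le_self_pow₀ one_le_two hk.ne'
    _ = (24 * k * Fintype.card ι) ^ k := by
        rw [← mul_assoc, ← mul_pow, ← mul_pow]; ring_nf

end FourierCoeff

section Averages

variable {t N : ℕ}

lemma avgCond_sub_avgUniform (ht : 0 < t) (f : (Fin t → Bool) → Matrix (Fin N) (Fin N) ℂ)
    (j : Fin t) (β : Bool) :
    avgCond f j β - avgUniform f = boolSign β • boolFourierCoeff f j := by
  have hsign : ∑ b, boolSign (b j) • f b =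
      boolSign β • ((2 : ℝ) • ∑ b ∈ Finset.univ.filter (fun b : Fin t → Bool => b j = β), f b -
        ∑ b, f b) := by
    rw [Finset.sum_filter, Finset.smul_sum, ← Finset.sum_sub_distrib, Finset.smul_sum]
    refine Finset.sum_congr rfl fun b _ => ?_
    cases b j <;> cases β <;> simp [boolSign] <;> module
  have hpow : (2 : ℝ) ^ t = 2 * 2 ^ (t - 1) := by rw [← pow_succ', Nat.sub_add_cancel ht]
  have hcast : ∀ k : ℕ, ((2 : ℂ) ^ k)⁻¹ = (((2 : ℝ) ^ k)⁻¹ : ℝ) := by intro k; push_cast; rfl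
  rw [boolFourierCoeff, Fintype.card_fin, hsign, smul_comm, smul_smul, smul_smul, mul_assoc,
    boolSign_mul_self, mul_one, avgCond, avgUniform, hcast, hcast, Complex.coe_smul,
    Complex.coe_smul, smul_sub, smul_smul, hpow]
  congr 2
  field_simp

lemma sum_traceDist_avgCond_avgUniform (ht : 0 < t)
    {f : (Fin t → Bool) → Matrix (Fin N) (Fin N) ℂ} (hf : ∀ b, (f b).IsHermitian) (j : Fin t) :
    ∑ β : Bool, traceDist (avgCond f j β) (avgUniform f) = traceNorm (boolFourierCoeff f j) := by
  simp only [Fintype.sum_bool, traceDist, avgCond_sub_avgUniform ht, boolSign, if_true,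
    Bool.false_eq_true, if_false, one_smul, neg_one_smul,
    (isHermitian_boolFourierCoeff hf j).traceNorm_neg]
  ring

end Averages

/-- Quantum distributional stability of compressing functions: any map from `t`
classical bits to `t'` qubits is `O(√(t'/t))`-QDS. -/
theorem qds_of_compressing :
    ∃ C : ℝ, 0 < C ∧ ∀ (t t' : ℕ), 0 < t → 0 < t' →
      ∀ f : (Fin t → Bool) → Matrix (Fin (2 ^ t')) (Fin (2 ^ t')) ℂ,
        (∀ b, IsDensityMatrix (f b)) →
        (1 / t : ℝ) * ∑ j : Fin t,
            ((1 / 2 : ℝ) * ∑ β : Bool, traceDist (avgCond f j β) (avgUniform f))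
          ≤ C * Real.sqrt ((t' : ℝ) / t) := by
  refine ⟨Real.sqrt 6, by positivity, fun t t' ht ht' f hf => ?_⟩
  have : Nonempty (Fin t) := ⟨⟨0, ht⟩⟩
  have hS := sum_traceNorm_boolFourierCoeff_sq_le hf ht' (by simp)
  simp only [sum_traceDist_avgCond_avgUniform ht (fun b => (hf b).1.1), ← Finset.mul_sum,
    Fintype.card_fin] at hS ⊢
  rw [← Real.sqrt_mul (by norm_num)]
  refine (le_abs_self _).trans (Real.abs_le_sqrt ?_)
  set S := ∑ j, traceNorm (boolFourierCoeff f j)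
  calc (1 / t * (1 / 2 * S) : ℝ) ^ 2 = S ^ 2 / (4 * (t : ℝ) ^ 2) := by ring
    _ ≤ 24 * t' * t / (4 * (t : ℝ) ^ 2) := by gcongr
    _ = 6 * ((t' : ℝ) / t) := by field_simp; ring
end

section
/- There exists a universal constant K > 0 such that the following holds. Let R and B be nonempty finite types and p : R → B → ℝ a payoff function with 0 ≤ p(r,c) ≤ 1 for all r, c. Let v = sup over mixed strategies σ (functions σ : R → ℝ≥0 with ∑_r σ(r) = 1) of inf over mixed strategies τ (functions τ : B → ℝ≥0 with ∑_c τ(c) = 1) of ∑_{r,c} σ(r)·τ(c)·p(r,c). Then for every ε > 0 there exists a nonempty multiset S over B with card(S) ≤ ⌈K·(Real.log (Fintype.card R) + 1)/ε²⌉ such that for every r ∈ R, (1/card(S))·∑_{c ∈ S} p(r,c) ≤ v + ε. -/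
open BigOperators Finset

/-- Convexity bound: `exp (η x) ≤ 1 + (exp η - 1) x` for `x ∈ [0,1]`. -/
lemma LY_exp_mul_le {η x : ℝ} (hx0 : 0 ≤ x) (hx1 : x ≤ 1) :
    Real.exp (η * x) ≤ 1 + (Real.exp η - 1) * x := by
  have h := convexOn_exp.2 (Set.mem_univ (0:ℝ)) (Set.mem_univ η)
    (by linarith : (0:ℝ) ≤ 1 - x) hx0 (by ring)
  simp only [smul_eq_mul, mul_zero, Real.exp_zero, add_zero, mul_one] at h
  calc Real.exp (η * x) = Real.exp ((1-x) * 0 + x * η) := by ring_nf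
    _ ≤ (1-x) * Real.exp 0 + x * Real.exp η := by simpa using h
    _ = 1 + (Real.exp η - 1) * x := by simp [Real.exp_zero]; ring

/-- `exp η ≤ 1 + η + η²` for `0 ≤ η ≤ 1`. -/
lemma LY_exp_le_quad {η : ℝ} (h0 : 0 ≤ η) (h1 : η ≤ 1) :
    Real.exp η ≤ 1 + η + η ^ 2 := by
  have hb := Real.exp_bound (x := η) (by rw [abs_of_nonneg h0]; exact h1)
    (n := 2) (by norm_num)
  rw [abs_of_nonneg h0] at hb
  have h2 : ∑ m ∈ Finset.range 2, η ^ m / (m.factorial : ℝ) = 1 + η := by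
    simp [Finset.sum_range_succ]
  rw [h2] at hb
  have h3 := (abs_le.1 hb).2
  norm_num [Nat.factorial] at h3
  nlinarith [sq_nonneg η]

/-- The multiplicative-weights iteration: there is a list of `T` columns whose
exponential potential is controlled. -/
lemma LY_mwu {R B : Type} [Fintype R] [Fintype B] [Nonempty R] [Nonempty B]
    (p : R → B → ℝ) (hp0 : ∀ r c, 0 ≤ p r c) (hp1 : ∀ r c, p r c ≤ 1)
    (v : ℝ) (hv0 : 0 ≤ v)
    (hkey : ∀ w : R → ℝ, (∀ r, 0 < w r) →
       ∀ c', (∀ c, ∑ r, w r * p r c' ≤ ∑ r, w r * p r c) →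
          ∑ r, w r * p r c' ≤ v * ∑ r, w r)
    (η : ℝ) (hη : 0 < η) (T : ℕ) :
    ∃ L : List B, L.length = T ∧
      (∑ r, Real.exp (η * ((L.map (p r)).sum))) ≤
        (Fintype.card R : ℝ) * Real.exp ((Real.exp η - 1) * v * T) := by
  induction T with
  | zero => exact ⟨[], rfl, by simp⟩
  | succ T ih =>
    obtain ⟨L, hlen, hΦ⟩ := ih
    set w : R → ℝ := fun r => Real.exp (η * ((L.map (p r)).sum)) with hw
    obtain ⟨c', -, hc'⟩ := Finset.exists_min_image Finset.univ
      (fun c => ∑ r, w r * p r c) ⟨Classical.arbitrary B, Finset.mem_univ _⟩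
    refine ⟨c' :: L, by simp [hlen], ?_⟩
    have hwpos : ∀ r, 0 < w r := fun r => Real.exp_pos _
    have hA : ∑ r, w r * p r c' ≤ v * ∑ r, w r :=
      hkey w hwpos c' (fun c => hc' c (Finset.mem_univ c))
    have hW0 : (0:ℝ) ≤ ∑ r, w r := Finset.sum_nonneg fun r _ => (hwpos r).le
    have hstep : ∀ r, Real.exp (η * (((c'::L).map (p r)).sum)) ≤
        w r + (Real.exp η - 1) * (w r * p r c') := by
      intro r
      have hsum : ((c'::L).map (p r)).sum = p r c' + (L.map (p r)).sum := by simp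
      have : Real.exp (η * (((c'::L).map (p r)).sum))
          = w r * Real.exp (η * p r c') := by
        rw [hsum, hw]; rw [← Real.exp_add]; ring_nf
      rw [this]
      have h1 : Real.exp (η * p r c') ≤ 1 + (Real.exp η - 1) * p r c' :=
        LY_exp_mul_le (hp0 r c') (hp1 r c')
      have := mul_le_mul_of_nonneg_left h1 (hwpos r).le
      nlinarith [this]
    have hε1 : (0:ℝ) ≤ Real.exp η - 1 := by
      have := Real.one_le_exp hη.le; linarith
    calc ∑ r, Real.exp (η * (((c'::L).map (p r)).sum))
        ≤ ∑ r, (w r + (Real.exp η - 1) * (w r * p r c')) :=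
          Finset.sum_le_sum fun r _ => hstep r
      _ = (∑ r, w r) + (Real.exp η - 1) * (∑ r, w r * p r c') := by
          rw [Finset.sum_add_distrib, Finset.mul_sum]
      _ ≤ (∑ r, w r) + (Real.exp η - 1) * (v * ∑ r, w r) := by
          have := mul_le_mul_of_nonneg_left hA hε1; linarith
      _ = (∑ r, w r) * (1 + (Real.exp η - 1) * v) := by ring
      _ ≤ (∑ r, w r) * Real.exp ((Real.exp η - 1) * v) := by
          have := Real.add_one_le_exp ((Real.exp η - 1) * v)
          have h := mul_le_mul_of_nonneg_left (by linarith : 1 + (Real.exp η - 1) * v ≤ Real.exp ((Real.exp η - 1) * v)) hW0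
          linarith [h]
      _ ≤ ((Fintype.card R : ℝ) * Real.exp ((Real.exp η - 1) * v * T)) *
            Real.exp ((Real.exp η - 1) * v) := by
          exact mul_le_mul_of_nonneg_right hΦ (Real.exp_pos _).le
      _ = (Fintype.card R : ℝ) * Real.exp ((Real.exp η - 1) * v * (T+1)) := by
          rw [mul_assoc, ← Real.exp_add]; ring_nf
      _ = (Fintype.card R : ℝ) * Real.exp ((Real.exp η - 1) * v * ((T:ℕ)+1 : ℕ)) := by
          push_cast; ring_nf

/-- The sparse minimax theorem of Lipton and Yung: in a two-player zero-sum game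
with payoffs in `[0,1]` and value `v`, for every `ε > 0` the column player has a
nearly optimal uniform mixed strategy supported on a multiset of size
`O(log |R| / ε²)`. -/
theorem sparse_minimax :
    ∃ K : ℝ, 0 < K ∧
      ∀ (R B : Type) [Fintype R] [Fintype B] [Nonempty R] [Nonempty B]
        (p : R → B → ℝ),
        (∀ r c, 0 ≤ p r c ∧ p r c ≤ 1) →
        ∀ v : ℝ,
          v = sSup {x : ℝ | ∃ σ : R → ℝ, (∀ r, 0 ≤ σ r) ∧ (∑ r, σ r) = 1 ∧
                x = sInf {y : ℝ | ∃ τ : B → ℝ, (∀ c, 0 ≤ τ c) ∧ (∑ c, τ c) = 1 ∧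
                      y = ∑ r, ∑ c, σ r * τ c * p r c}} →
          ∀ ε : ℝ, 0 < ε →
            ∃ S : Multiset B, S ≠ 0 ∧
              Multiset.card S ≤ ⌈K * (Real.log (Fintype.card R) + 1) / ε ^ 2⌉₊ ∧
              ∀ r : R, (1 / (Multiset.card S : ℝ)) * (S.map (p r)).sum ≤ v + ε := by
  refine ⟨4, by norm_num, ?_⟩
  intro R B _ _ _ _ p hp v hv ε hε
  have hp0 : ∀ r c, 0 ≤ p r c := fun r c => (hp r c).1
  have hp1 : ∀ r c, p r c ≤ 1 := fun r c => (hp r c).2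
  have hR0 : (0:ℝ) < (Fintype.card R : ℝ) := by exact_mod_cast Fintype.card_pos
  have hB0 : (0:ℝ) < (Fintype.card B : ℝ) := by exact_mod_cast Fintype.card_pos
  -- the uniform strategies
  set σ₀ : R → ℝ := fun _ => (Fintype.card R : ℝ)⁻¹ with hσ₀
  set τ₀ : B → ℝ := fun _ => (Fintype.card B : ℝ)⁻¹ with hτ₀
  have hσ₀0 : ∀ r, 0 ≤ σ₀ r := fun r => by positivity
  have hτ₀0 : ∀ c, 0 ≤ τ₀ c := fun c => by positivity
  have hσ₀1 : ∑ r, σ₀ r = 1 := by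
    simp [hσ₀, Finset.sum_const, Finset.card_univ, nsmul_eq_mul,
      mul_inv_cancel₀ hR0.ne']
  have hτ₀1 : ∑ c, τ₀ c = 1 := by
    simp [hτ₀, Finset.sum_const, Finset.card_univ, nsmul_eq_mul,
      mul_inv_cancel₀ hB0.ne']
  -- the inner infimum sets
  set Y : (R → ℝ) → Set ℝ := fun σ =>
    {y : ℝ | ∃ τ : B → ℝ, (∀ c, 0 ≤ τ c) ∧ (∑ c, τ c) = 1 ∧
          y = ∑ r, ∑ c, σ r * τ c * p r c} with hYdef
  set X : Set ℝ :=
    {x : ℝ | ∃ σ : R → ℝ, (∀ r, 0 ≤ σ r) ∧ (∑ r, σ r) = 1 ∧ x = sInf (Y σ)} with hXdef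
  have hvX : v = sSup X := hv
  -- bounds on payoff values
  have hval : ∀ (σ : R → ℝ) (τ : B → ℝ), (∀ r, 0 ≤ σ r) → (∑ r, σ r) = 1 →
      (∀ c, 0 ≤ τ c) → (∑ c, τ c) = 1 →
      0 ≤ (∑ r, ∑ c, σ r * τ c * p r c) ∧ (∑ r, ∑ c, σ r * τ c * p r c) ≤ 1 := by
    intro σ τ hσ0 hσ1 hτ0 hτ1
    constructor
    · apply Finset.sum_nonneg; intro r _
      apply Finset.sum_nonneg; intro c _
      have := hσ0 r; have := hτ0 c; have := hp0 r c; positivity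
    · calc ∑ r, ∑ c, σ r * τ c * p r c ≤ ∑ r, ∑ c, σ r * τ c := by
            apply Finset.sum_le_sum; intro r _
            apply Finset.sum_le_sum; intro c _
            have h1 : σ r * τ c * p r c ≤ σ r * τ c * 1 := by
              apply mul_le_mul_of_nonneg_left (hp1 r c)
              exact mul_nonneg (hσ0 r) (hτ0 c)
            linarith
        _ = ∑ r, σ r * ∑ c, τ c := by
            apply Finset.sum_congr rfl; intro r _; rw [Finset.mul_sum]
        _ = 1 := by rw [hτ1]; simpa using hσ1
  have hYne : ∀ σ : R → ℝ, (Y σ).Nonempty := fun σ =>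
    ⟨∑ r, ∑ c, σ r * τ₀ c * p r c, τ₀, hτ₀0, hτ₀1, rfl⟩
  have hYbdd : ∀ σ : R → ℝ, (∀ r, 0 ≤ σ r) → (∑ r, σ r) = 1 →
      BddBelow (Y σ) := by
    intro σ hσ0 hσ1
    exact ⟨0, fun y hy => by
      obtain ⟨τ, hτ0, hτ1, rfl⟩ := hy
      exact (hval σ τ hσ0 hσ1 hτ0 hτ1).1⟩
  have hXbdd : BddAbove X := by
    refine ⟨1, fun x hx => ?_⟩
    obtain ⟨σ, hσ0, hσ1, rfl⟩ := hx
    calc sInf (Y σ) ≤ ∑ r, ∑ c, σ r * τ₀ c * p r c :=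
          csInf_le (hYbdd σ hσ0 hσ1) ⟨τ₀, hτ₀0, hτ₀1, rfl⟩
      _ ≤ 1 := (hval σ τ₀ hσ0 hσ1 hτ₀0 hτ₀1).2
  have hXne : X.Nonempty := ⟨sInf (Y σ₀), σ₀, hσ₀0, hσ₀1, rfl⟩
  have hv1 : v ≤ 1 := by
    rw [hvX]
    apply csSup_le hXne
    intro x hx
    obtain ⟨σ, hσ0, hσ1, rfl⟩ := hx
    calc sInf (Y σ) ≤ ∑ r, ∑ c, σ r * τ₀ c * p r c :=
          csInf_le (hYbdd σ hσ0 hσ1) ⟨τ₀, hτ₀0, hτ₀1, rfl⟩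
      _ ≤ 1 := (hval σ τ₀ hσ0 hσ1 hτ₀0 hτ₀1).2
  have hv0 : 0 ≤ v := by
    rw [hvX]
    have h1 : (0:ℝ) ≤ sInf (Y σ₀) := by
      apply le_csInf (hYne σ₀)
      intro y hy
      obtain ⟨τ, hτ0, hτ1, rfl⟩ := hy
      exact (hval σ₀ τ hσ₀0 hσ₀1 hτ0 hτ1).1
    exact h1.trans (le_csSup hXbdd ⟨σ₀, hσ₀0, hσ₀1, rfl⟩)
  -- the key property: any weighted best response value is at most v
  have hkey : ∀ w : R → ℝ, (∀ r, 0 < w r) →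
      ∀ c', (∀ c, ∑ r, w r * p r c' ≤ ∑ r, w r * p r c) →
        ∑ r, w r * p r c' ≤ v * ∑ r, w r := by
    intro w hw c' hc'
    set W := ∑ r, w r with hWdef
    have hW0 : 0 < W := Finset.sum_pos (fun r _ => hw r) Finset.univ_nonempty
    set σ : R → ℝ := fun r => w r / W with hσdef
    have hσ0 : ∀ r, 0 ≤ σ r := fun r => div_nonneg (hw r).le hW0.le
    have hσ1 : ∑ r, σ r = 1 := by
      rw [hσdef]; simp only []
      rw [← Finset.sum_div]; exact div_self hW0.ne'
    set m := ∑ r, σ r * p r c' with hmdef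
    have hm_eq : ∀ c, ∑ r, σ r * p r c = (∑ r, w r * p r c) / W := by
      intro c
      rw [Finset.sum_div]
      apply Finset.sum_congr rfl
      intro r _; rw [hσdef]; ring
    have hm_le : ∀ c, m ≤ ∑ r, σ r * p r c := by
      intro c
      rw [hmdef, hm_eq, hm_eq]
      exact (div_le_div_iff_of_pos_right hW0).mpr (hc' c)
    have h1 : m ≤ sInf (Y σ) := by
      apply le_csInf (hYne σ)
      intro y hy
      obtain ⟨τ, hτ0, hτ1, rfl⟩ := hy
      calc m = m * ∑ c, τ c := by rw [hτ1, mul_one]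
        _ = ∑ c, τ c * m := by
              rw [Finset.mul_sum]
              exact Finset.sum_congr rfl fun c _ => by ring
        _ ≤ ∑ c, τ c * (∑ r, σ r * p r c) :=
              Finset.sum_le_sum fun c _ =>
                mul_le_mul_of_nonneg_left (hm_le c) (hτ0 c)
        _ = ∑ c, ∑ r, σ r * τ c * p r c :=
              Finset.sum_congr rfl fun c _ => by
                rw [Finset.mul_sum]
                exact Finset.sum_congr rfl fun r _ => by ring
        _ = ∑ r, ∑ c, σ r * τ c * p r c := Finset.sum_comm
    have h2 : sInf (Y σ) ≤ v := by
      rw [hvX]; exact le_csSup hXbdd ⟨σ, hσ0, hσ1, rfl⟩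
    have hmv : m ≤ v := h1.trans h2
    have : (∑ r, w r * p r c') / W ≤ v := by rw [← hm_eq c', ← hmdef]; exact hmv
    calc ∑ r, w r * p r c' = ((∑ r, w r * p r c') / W) * W := by
            field_simp
      _ ≤ v * W := mul_le_mul_of_nonneg_right this hW0.le
  -- main case split
  by_cases hε1 : 1 ≤ ε
  · -- trivial case: a single column suffices
    refine ⟨{Classical.arbitrary B}, by simp, ?_, ?_⟩
    · have hlog : 0 ≤ Real.log (Fintype.card R) := by
        apply Real.log_nonneg
        exact_mod_cast Fintype.card_pos
      have : (0:ℝ) < 4 * (Real.log (Fintype.card R) + 1) / ε ^ 2 := by positivity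
      simpa using Nat.one_le_ceil_iff.mpr this
    · intro r
      simp only [Multiset.card_singleton, Multiset.map_singleton,
        Multiset.sum_singleton, Nat.cast_one]
      have := hp1 r (Classical.arbitrary B)
      linarith
  · push_neg at hε1
    set η : ℝ := ε / 2 with hηdef
    have hη0 : 0 < η := by positivity
    have hη1 : η ≤ 1 := by rw [hηdef]; linarith
    set T : ℕ := ⌈4 * (Real.log (Fintype.card R) + 1) / ε ^ 2⌉₊ with hTdef
    have hlog : 0 ≤ Real.log (Fintype.card R) := by
      apply Real.log_nonneg
      exact_mod_cast Fintype.card_pos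
    have hTpos : 0 < T := by
      rw [hTdef]
      apply Nat.one_le_ceil_iff.mpr
      positivity
    have hTreal : 4 * (Real.log (Fintype.card R) + 1) / ε ^ 2 ≤ (T:ℝ) :=
      Nat.le_ceil _
    have hT0 : (0:ℝ) < (T:ℝ) := by exact_mod_cast hTpos
    obtain ⟨L, hlen, hΦ⟩ := LY_mwu p hp0 hp1 v hv0 hkey η hη0 T
    refine ⟨(L : Multiset B), ?_, ?_, ?_⟩
    · intro h
      have hL : L = [] := (Multiset.coe_eq_zero L).mp h
      rw [hL] at hlen
      simp at hlen
      omega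
    · rw [Multiset.coe_card, hlen]
    · intro r
      rw [Multiset.coe_card, hlen]
      have hmap : ((L : Multiset B).map (p r)).sum = (L.map (p r)).sum := by
        simp
      rw [hmap]
      set s := (L.map (p r)).sum with hsdef
      -- single term bound in the potential
      have h1 : Real.exp (η * s) ≤ ∑ r', Real.exp (η * ((L.map (p r')).sum)) := by
        apply Finset.single_le_sum (f := fun r' => Real.exp (η * ((L.map (p r')).sum)))
          (fun r' _ => (Real.exp_pos _).le) (Finset.mem_univ r)
      have h2 : Real.exp (η * s) ≤
          (Fintype.card R : ℝ) * Real.exp ((Real.exp η - 1) * v * T) :=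
        h1.trans hΦ
      have h3 : (Fintype.card R : ℝ) * Real.exp ((Real.exp η - 1) * v * T)
          = Real.exp (Real.log (Fintype.card R) + (Real.exp η - 1) * v * T) := by
        rw [Real.exp_add, Real.exp_log hR0]
      rw [h3] at h2
      have h4 : η * s ≤ Real.log (Fintype.card R) + (Real.exp η - 1) * v * T :=
        Real.exp_le_exp.mp h2
      -- bound exp η - 1 ≤ η + η²
      have h5 : Real.exp η - 1 ≤ η + η ^ 2 := by
        have := LY_exp_le_quad hη0.le hη1; linarith
      have h6 : (Real.exp η - 1) * v * T ≤ η * v * T + η ^ 2 * T := by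
        have hvT : (0:ℝ) ≤ v * T := mul_nonneg hv0 hT0.le
        have ha := mul_le_mul_of_nonneg_right h5 hvT
        have hb2 : η ^ 2 * (v * T) ≤ η ^ 2 * T :=
          mul_le_mul_of_nonneg_left (mul_le_of_le_one_left hT0.le hv1)
            (by positivity)
        nlinarith [ha, hb2]
      have h7 : η * s ≤ Real.log (Fintype.card R) + η * v * T + η ^ 2 * T := by
        linarith
      -- from T ≥ 4(log+1)/ε² get log ≤ ε² T / 4 - 1 ≤ ε² T / 4
      have h8 : Real.log (Fintype.card R) + 1 ≤ ε ^ 2 * T / 4 := by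
        have hε2 : (0:ℝ) < ε ^ 2 := by positivity
        rw [div_le_iff₀ hε2] at hTreal
        linarith
      -- conclude: η s ≤ ε²T/4 + η v T + η² T, with η = ε/2, η² = ε²/4
      have h9 : η * s ≤ η * ((v + ε) * T) := by
        have hηsq : η ^ 2 = ε ^ 2 / 4 := by rw [hηdef]; ring
        have : η * ((v + ε) * T) = η * v * T + (ε/2) * (ε * T) := by
          rw [hηdef]; ring
        rw [this]
        have h10 : Real.log (Fintype.card R) ≤ ε ^ 2 * T / 4 := by linarith
        have h11 : η ^ 2 * T = ε ^ 2 * T / 4 := by rw [hηsq]; ring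
        have h12 : (ε/2) * (ε * T) = 2 * (ε ^ 2 * T / 4) := by ring
        rw [h12]
        linarith
      have h13 : s ≤ (v + ε) * T := le_of_mul_le_mul_left h9 hη0
      rw [div_mul_eq_mul_div, one_mul, div_le_iff₀ hT0]
      linarith [h13]
end

section
/- Let ρ₁, ρ₂ be density matrices on Fin n and σ₁, σ₂ be density matrices on Fin m. Then D(ρ₁ ⊗ σ₁, ρ₂ ⊗ σ₂) ≤ D(ρ₁, ρ₂) + D(σ₁, σ₂), where ⊗ denotes the Kronecker product. -/
open Matrix BigOperators ComplexOrder

open Kronecker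

/-! For positive semidefinite `P`, `Q` one has `‖P - Q‖₁ ≤ tr P + tr Q`: in an eigenbasis of
`P - Q` each eigenvalue is the difference of the corresponding diagonal entries of `P` and `Q`,
which are nonnegative. Splitting a Hermitian matrix into its positive and negative spectral parts
attains this bound. Now `ρ₁ ⊗ σ₁ - ρ₂ ⊗ σ₂ = (ρ₁ - ρ₂) ⊗ σ₁ + ρ₂ ⊗ (σ₁ - σ₂)`, and splitting
`ρ₁ - ρ₂` and `σ₁ - σ₂` in this way writes it as a difference of two positive semidefinite
matrices whose traces add up to `‖ρ₁ - ρ₂‖₁ tr σ₁ + tr ρ₂ ‖σ₁ - σ₂‖₁`. -/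

namespace Matrix

section

variable {n : Type*} [Fintype n] [DecidableEq n]

theorem trace_mul_mul_star_of_star_mul_self {U : Matrix n n ℂ} (hU : star U * U = 1)
    (X : Matrix n n ℂ) : (U * X * star U).trace = X.trace := by
  rw [trace_mul_cycle, hU, one_mul]

theorem traceNorm_eq_sum_abs_eigenvalues {A : Matrix n n ℂ} (hA : A.IsHermitian) :
    traceNorm A = ∑ i, |hA.eigenvalues i| :=
  dif_pos hA

theorem traceNorm_sub_le_re_trace_add_re_trace {P Q : Matrix n n ℂ} (hP : P.PosSemidef)
    (hQ : Q.PosSemidef) : traceNorm (P - Q) ≤ P.trace.re + Q.trace.re := by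
  have hPQ : (P - Q).IsHermitian := hP.1.sub hQ.1
  set V : Matrix n n ℂ := ((star hPQ.eigenvectorUnitary : unitaryGroup n ℂ) : Matrix n n ℂ)
  have hV : star V * V = 1 := Unitary.coe_star_mul_self _
  have h_eig : ∀ i, (hPQ.eigenvalues i : ℂ) = (V * P * star V) i i - (V * Q * star V) i i := by
    intro i
    have := congrFun₂ hPQ.conjStarAlgAut_star_eigenvectorUnitary i i
    rw [Unitary.conjStarAlgAut_apply] at this
    simpa [V, mul_sub, sub_mul] using this.symm
  have h_diag_nonneg : ∀ {X : Matrix n n ℂ}, X.PosSemidef → ∀ i, 0 ≤ ((V * X * star V) i i).re :=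
    fun hX i => (Complex.nonneg_iff.mp ((hX.mul_mul_conjTranspose_same V).diag_nonneg (i := i))).1
  calc traceNorm (P - Q) = ∑ i, |((V * P * star V) i i).re - ((V * Q * star V) i i).re| := by
        rw [traceNorm_eq_sum_abs_eigenvalues hPQ]
        congr! with i
        simpa using congrArg Complex.re (h_eig i)
    _ ≤ ∑ i, (((V * P * star V) i i).re + ((V * Q * star V) i i).re) := by
        gcongr with i
        have := h_diag_nonneg hP i
        have := h_diag_nonneg hQ i
        rw [abs_sub_le_iff]
        constructor <;> linarith
    _ = (V * P * star V).trace.re + (V * Q * star V).trace.re := by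
        simp [Finset.sum_add_distrib, trace, Complex.re_sum]
    _ = P.trace.re + Q.trace.re := by
        rw [trace_mul_mul_star_of_star_mul_self hV, trace_mul_mul_star_of_star_mul_self hV]

theorem re_trace_mul_diagonal_mul_star_of_star_mul_self {U : Matrix n n ℂ} (hU : star U * U = 1)
    (d : n → ℝ) : (U * diagonal (fun i => (d i : ℂ)) * star U).trace.re = ∑ i, d i := by
  simp [trace_mul_mul_star_of_star_mul_self hU, Complex.re_sum]

theorem posSemidef_mul_diagonal_mul_conjTranspose {m : Type*} [Finite m] (B : Matrix m n ℂ)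
    {d : n → ℝ} (hd : ∀ i, 0 ≤ d i) : (B * diagonal (fun i => (d i : ℂ)) * Bᴴ).PosSemidef :=
  (posSemidef_diagonal_iff.mpr fun i => Complex.zero_le_real.mpr (hd i)).mul_mul_conjTranspose_same
    B

theorem IsHermitian.exists_posSemidef_sub_eq {A : Matrix n n ℂ} (hA : A.IsHermitian) :
    ∃ P Q : Matrix n n ℂ, P.PosSemidef ∧ Q.PosSemidef ∧ A = P - Q ∧
      P.trace.re + Q.trace.re = traceNorm A := by
  set U : Matrix n n ℂ := (hA.eigenvectorUnitary : Matrix n n ℂ)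
  have hU : star U * U = 1 := Unitary.coe_star_mul_self _
  refine ⟨U * diagonal (fun i => (((hA.eigenvalues i)⁺ : ℝ) : ℂ)) * star U,
    U * diagonal (fun i => (((hA.eigenvalues i)⁻ : ℝ) : ℂ)) * star U, ?_, ?_, ?_, ?_⟩
  · exact posSemidef_mul_diagonal_mul_conjTranspose U fun i => posPart_nonneg _
  · exact posSemidef_mul_diagonal_mul_conjTranspose U fun i => negPart_nonneg _
  · rw [← sub_mul, ← mul_sub, diagonal_sub]
    conv_lhs => rw [hA.spectral_theorem, Unitary.conjStarAlgAut_apply]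
    congr 3 with i
    rw [Function.comp_apply, ← Complex.ofReal_sub, posPart_sub_negPart]
    rfl
  · rw [re_trace_mul_diagonal_mul_star_of_star_mul_self hU,
      re_trace_mul_diagonal_mul_star_of_star_mul_self hU, ← Finset.sum_add_distrib,
      traceNorm_eq_sum_abs_eigenvalues hA]
    simp only [posPart_add_negPart]

theorem IsHermitian.im_trace {A : Matrix n n ℂ} (hA : A.IsHermitian) : A.trace.im = 0 := by
  simp [hA.trace_eq_sum_eigenvalues, Complex.im_sum]

end

section Kronecker

variable {l m p q R : Type*}

theorem sub_kronecker [Ring R] (A B : Matrix l m R) (C : Matrix p q R) :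
    (A - B) ⊗ₖ C = A ⊗ₖ C - B ⊗ₖ C := by
  ext
  simp [sub_mul]

theorem kronecker_sub [Ring R] (A : Matrix l m R) (B C : Matrix p q R) :
    A ⊗ₖ (B - C) = A ⊗ₖ B - A ⊗ₖ C := by
  ext
  simp [mul_sub]

variable [Fintype l] [Fintype p] [DecidableEq p]

theorem re_trace_kronecker_of_isHermitian {A : Matrix l l ℂ} {B : Matrix p p ℂ}
    (hB : B.IsHermitian) : (A ⊗ₖ B).trace.re = A.trace.re * B.trace.re := by
  simp [trace_kronecker, Complex.mul_re, hB.im_trace]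

variable [DecidableEq l]

theorem traceNorm_kronecker_sub_kronecker_le {ρ₁ ρ₂ : Matrix l l ℂ} {σ₁ σ₂ : Matrix p p ℂ}
    (hρ₁ : ρ₁.IsHermitian) (hρ₂ : ρ₂.PosSemidef) (hσ₁ : σ₁.PosSemidef) (hσ₂ : σ₂.IsHermitian) :
    traceNorm (ρ₁ ⊗ₖ σ₁ - ρ₂ ⊗ₖ σ₂) ≤
      traceNorm (ρ₁ - ρ₂) * σ₁.trace.re + ρ₂.trace.re * traceNorm (σ₁ - σ₂) := by
  obtain ⟨P, Q, hP, hQ, hPQ, htrPQ⟩ := (hρ₁.sub hρ₂.1).exists_posSemidef_sub_eq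
  obtain ⟨R, S, hR, hS, hRS, htrRS⟩ := (hσ₁.1.sub hσ₂).exists_posSemidef_sub_eq
  have h_split : ρ₁ ⊗ₖ σ₁ - ρ₂ ⊗ₖ σ₂ = (P ⊗ₖ σ₁ + ρ₂ ⊗ₖ R) - (Q ⊗ₖ σ₁ + ρ₂ ⊗ₖ S) :=
    calc ρ₁ ⊗ₖ σ₁ - ρ₂ ⊗ₖ σ₂ = (ρ₁ - ρ₂) ⊗ₖ σ₁ + ρ₂ ⊗ₖ (σ₁ - σ₂) := by
          rw [sub_kronecker, kronecker_sub]; abel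
      _ = (P ⊗ₖ σ₁ + ρ₂ ⊗ₖ R) - (Q ⊗ₖ σ₁ + ρ₂ ⊗ₖ S) := by
          rw [hPQ, hRS, sub_kronecker, kronecker_sub]; abel
  calc traceNorm (ρ₁ ⊗ₖ σ₁ - ρ₂ ⊗ₖ σ₂)
      ≤ (P ⊗ₖ σ₁ + ρ₂ ⊗ₖ R).trace.re + (Q ⊗ₖ σ₁ + ρ₂ ⊗ₖ S).trace.re := by
        rw [h_split]
        exact traceNorm_sub_le_re_trace_add_re_trace ((hP.kronecker hσ₁).add (hρ₂.kronecker hR))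
          ((hQ.kronecker hσ₁).add (hρ₂.kronecker hS))
    _ = (P.trace.re + Q.trace.re) * σ₁.trace.re + ρ₂.trace.re * (R.trace.re + S.trace.re) := by
        simp only [trace_add, Complex.add_re, re_trace_kronecker_of_isHermitian hσ₁.1,
          re_trace_kronecker_of_isHermitian hR.1, re_trace_kronecker_of_isHermitian hS.1]
        ring
    _ = traceNorm (ρ₁ - ρ₂) * σ₁.trace.re + ρ₂.trace.re * traceNorm (σ₁ - σ₂) := by
        rw [htrPQ, htrRS]

end Kronecker

end Matrix

/-- Subadditivity of trace distance for tensor products. -/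
theorem traceDist_kronecker_le {n m : ℕ}
    (ρ₁ ρ₂ : Matrix (Fin n) (Fin n) ℂ) (σ₁ σ₂ : Matrix (Fin m) (Fin m) ℂ)
    (hρ₁ : IsDensityMatrix ρ₁) (hρ₂ : IsDensityMatrix ρ₂)
    (hσ₁ : IsDensityMatrix σ₁) (hσ₂ : IsDensityMatrix σ₂) :
    traceDist (ρ₁ ⊗ₖ σ₁) (ρ₂ ⊗ₖ σ₂) ≤ traceDist ρ₁ ρ₂ + traceDist σ₁ σ₂ := by
  have h := traceNorm_kronecker_sub_kronecker_le hρ₁.1.1 hρ₂.1 hσ₁.1 hσ₂.1.1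
  rw [hσ₁.2, hρ₂.2, Complex.one_re, mul_one, one_mul] at h
  simp only [traceDist]
  linarith
end
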